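/- Let u ∈ H^2 with ‖u‖ = 1, v ∈ H^2, and consider R₁ f = θ f + ⟨f, u⟩ v where θ is an inner function. If 1 + ⟨θ̄v, u⟩ ≠ 0 (where θ̄v is interpreted as the function conj(θ)·v, assumed to lie in H^2), then Ker R₁ = {0}; if 1 + ⟨θ̄v, u⟩ = 0 and θ̄v ∈ H^2, then Ker R₁ = ℂ·(θ̄v), the one-dimensional span of θ̄v. -/

import Mathlib

open MeasureTheory Complex Real ComplexConjugate
open scoped ENNReal

noncomputable section

instance : Fact (0 < 2 * π) := ⟨by positivity⟩

/-- The unit circle, modelled as `ℝ / 2πℤ`. -/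
abbrev UnitCircle : Type := AddCircle (2 * π)

/-- Normalized Haar (Lebesgue) measure on the circle. -/
abbrev μc : Measure UnitCircle := AddCircle.haarAddCircle

/-- The space `L²(𝕋)`. -/
abbrev L2T : Type := Lp ℂ 2 μc

/-- The Hardy space `H²`, the closed span of `{eⁱⁿᵗ : n ≥ 0}` inside `L²(𝕋)`. -/
def H2 : Submodule ℂ L2T :=
  (Submodule.span ℂ (Set.range fun n : ℕ => (fourierLp 2 (n : ℤ) : L2T))).topologicalClosure

instance : CompleteSpace H2 :=
  IsClosed.completeSpace_coe (hs := Submodule.isClosed_topologicalClosure _)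

/-- The orthogonal projection `P : L²(𝕋) → H²`. -/
def PH2 : L2T →L[ℂ] H2 := Submodule.orthogonalProjectionOnto H2

/-- Multiplication of an `L²` function by an essentially bounded symbol. -/
def symbMul (g : UnitCircle → ℂ) (hg : MemLp g ∞ μc) (f : L2T) : L2T :=
  ((Lp.memLp f).smul (r := 2) hg).toLp (g • ⇑f)

/-- The Toeplitz operator `T_g f = P(gf)`, viewed as a map `L²(𝕋) → L²(𝕋)`
(its restriction to `H²` is the classical Toeplitz operator). -/
def Toeplitz (g : UnitCircle → ℂ) (hg : MemLp g ∞ μc) (f : L2T) : L2T :=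
  (PH2 (symbMul g hg f) : L2T)

/-- The boundary coordinate function `z = eⁱᵗ` on the circle. -/
def zfun : UnitCircle → ℂ := fun x => fourier 1 x

lemma zfun_memLinfty : MemLp zfun ∞ μc := by
  refine memLp_top_of_bound ((fourier 1).continuous.aestronglyMeasurable) 1 ?_
  filter_upwards with x
  simp [zfun, Circle.norm_coe]

lemma conj_zfun_memLinfty : MemLp (fun x => conj (zfun x)) ∞ μc := by
  refine memLp_top_of_bound (Continuous.aestronglyMeasurable (Complex.continuous_conj.comp ((fourier 1).continuous))) 1 ?_
  filter_upwards with x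
  simp [zfun, Circle.norm_coe]

/-- The backward shift `S* = T_{z̄}` on `L²`; its restriction to `H²` is the classical
backward shift `(S^*f)(z) = (f(z)-f(0))/z`. -/
def Sstar (f : L2T) : L2T := Toeplitz (fun x => conj (zfun x)) conj_zfun_memLinfty f

/-- Evaluation of (the analytic extension of) `f` at the origin: the mean value `f(0) = ∫ f`. -/
def ev0 (f : L2T) : ℂ := ∫ x, f x ∂μc

/-- The constant function `1` as an element of `L²(𝕋)` (it is `e⁰`). -/
def onefun : L2T := fourierLp 2 (0 : ℤ)

lemma zpow_memLinfty (m : ℕ) : MemLp (fun x => zfun x ^ m) ∞ μc := by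
  refine memLp_top_of_bound (Continuous.aestronglyMeasurable (by
    exact Continuous.pow (fourier 1).continuous m)) 1 ?_
  filter_upwards with x
  simp [zfun, Circle.norm_coe]

/-- An essentially bounded symbol is in particular square-integrable: the associated `L²`
element. -/
def toL2 (g : UnitCircle → ℂ) (hg : MemLp g ∞ μc) : L2T :=
  (hg.mono_exponent le_top).toLp g

/-- A bounded symbol `g` is *analytic* (i.e. belongs to `H^∞`) iff multiplication by `g`
preserves the Hardy space `H²`. -/
def IsAnalytic (g : UnitCircle → ℂ) (hg : MemLp g ∞ μc) : Prop :=
  ∀ f : L2T, f ∈ H2 → symbMul g hg f ∈ H2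

/-- A bounded symbol is *inner* if it is analytic and unimodular a.e. on the circle. -/
def IsInner (g : UnitCircle → ℂ) (hg : MemLp g ∞ μc) : Prop :=
  IsAnalytic g hg ∧ ∀ᵐ x ∂μc, ‖g x‖ = 1

/-- The subspace `θ·H²` of `L²(𝕋)`. -/
def mulH2 (θ : UnitCircle → ℂ) (hθ : MemLp θ ∞ μc) : Submodule ℂ L2T :=
  Submodule.span ℂ {f : L2T | ∃ h ∈ H2, f = symbMul θ hθ h}

/-- The model space `K_θ = H² ⊖ θH²`. -/
def Kmodel (θ : UnitCircle → ℂ) (hθ : MemLp θ ∞ μc) : Submodule ℂ L2T :=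
  H2 ⊓ (mulH2 θ hθ)ᗮ

instance (θ : UnitCircle → ℂ) (hθ : MemLp θ ∞ μc) : CompleteSpace (Kmodel θ hθ) := by
  refine IsClosed.completeSpace_coe (hs := ?_)
  have : ((Kmodel θ hθ : Submodule ℂ L2T) : Set L2T)
      = (H2 : Set L2T) ∩ ((mulH2 θ hθ)ᗮ : Set L2T) := rfl
  rw [this]
  exact (Submodule.isClosed_topologicalClosure _).inter (Submodule.isClosed_orthogonal _)

/-- An element `u ∈ H²` is *outer* if the polynomial multiples of `u` are dense in `H²`
(Beurling). -/
def IsOuterL2 (uL : L2T) : Prop :=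
  (Submodule.span ℂ
    (Set.range fun n : ℕ => symbMul (fun x => zfun x ^ n) (zpow_memLinfty n) uL)).topologicalClosure
    = H2

open scoped ComplexInnerProductSpace

instance (U : Submodule ℂ L2T) : CompleteSpace (H2 ⊓ Uᗮ : Submodule ℂ L2T) := by
  refine IsClosed.completeSpace_coe (hs := ?_)
  have : ((H2 ⊓ Uᗮ : Submodule ℂ L2T) : Set L2T) = (H2 : Set L2T) ∩ (Uᗮ : Set L2T) := rfl
  rw [this]
  exact (Submodule.isClosed_topologicalClosure _).inter (Submodule.isClosed_orthogonal _)


lemma symbMul_ae (g : UnitCircle → ℂ) (hg : MemLp g ∞ μc) (f : L2T) :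
    ⇑(symbMul g hg f) =ᵐ[μc] g • ⇑f :=
  MemLp.coeFn_toLp _

lemma symbMul_add (g : UnitCircle → ℂ) (hg : MemLp g ∞ μc) (f f' : L2T) :
    symbMul g hg (f + f') = symbMul g hg f + symbMul g hg f' := by
  apply Lp.ext
  filter_upwards [symbMul_ae g hg (f + f'),
    Lp.coeFn_add (symbMul g hg f) (symbMul g hg f'),
    symbMul_ae g hg f, symbMul_ae g hg f', Lp.coeFn_add f f'] with x h1 h2 h3 h4 h5
  rw [h1, h2, Pi.add_apply, h3, h4]
  simp only [Pi.smul_apply, smul_eq_mul, Pi.mul_apply, h5, Pi.add_apply, mul_add]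

lemma symbMul_smul (g : UnitCircle → ℂ) (hg : MemLp g ∞ μc) (c : ℂ) (f : L2T) :
    symbMul g hg (c • f) = c • symbMul g hg f := by
  apply Lp.ext
  filter_upwards [symbMul_ae g hg (c • f), Lp.coeFn_smul c (symbMul g hg f),
    symbMul_ae g hg f, Lp.coeFn_smul c f] with x h1 h2 h3 h4
  rw [h1, h2, Pi.smul_apply, h3]
  simp only [Pi.smul_apply, smul_eq_mul, Pi.mul_apply, h4, Pi.smul_apply, smul_eq_mul]
  ring

lemma symbMul_zero (g : UnitCircle → ℂ) (hg : MemLp g ∞ μc) :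
    symbMul g hg (0 : L2T) = 0 := by
  apply Lp.ext
  filter_upwards [symbMul_ae g hg 0, Lp.coeFn_zero ℂ 2 μc] with x h1 h2
  rw [h1]
  simp only [smul_eq_mul, Pi.mul_apply]
  rw [h2]
  simp

lemma symbMul_inj (θ : UnitCircle → ℂ) (hθ : MemLp θ ∞ μc)
    (hmod : ∀ᵐ x ∂μc, ‖θ x‖ = 1) (f : L2T) (h : symbMul θ hθ f = 0) : f = 0 := by
  apply Lp.ext
  have h0 : ⇑(symbMul θ hθ f) =ᵐ[μc] ⇑(0 : L2T) := by rw [h]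
  filter_upwards [symbMul_ae θ hθ f, h0, Lp.coeFn_zero ℂ 2 μc, hmod] with x h1 h2 h3 h4
  rw [h3]
  have : θ x * f x = 0 := by
    have := h1.symm.trans (h2.trans h3)
    simpa using this
  have hθx : θ x ≠ 0 := by
    intro hz; rw [hz] at h4; simp at h4
  simpa [hθx] using this

lemma symbMul_conj_cancel (θ : UnitCircle → ℂ) (hθ : MemLp θ ∞ μc)
    (hθc : MemLp (fun x => conj (θ x)) ∞ μc)
    (hmod : ∀ᵐ x ∂μc, ‖θ x‖ = 1) (v : L2T) :
    symbMul θ hθ (symbMul (fun x => conj (θ x)) hθc v) = v := by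
  apply Lp.ext
  filter_upwards [symbMul_ae θ hθ (symbMul (fun x => conj (θ x)) hθc v),
    symbMul_ae (fun x => conj (θ x)) hθc v, hmod] with x h1 h2 h3
  rw [h1]
  simp only [Pi.smul_apply, smul_eq_mul, Pi.mul_apply] at h2 ⊢
  rw [h2]
  have : θ x * conj (θ x) = 1 := by
    rw [Complex.mul_conj]
    norm_cast
    rw [Complex.normSq_eq_norm_sq]
    simp only [h3, one_pow]
  rw [← mul_assoc, this, one_mul]

lemma Toeplitz_eq_symbMul (θ : UnitCircle → ℂ) (hθ : MemLp θ ∞ μc)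
    (han : IsAnalytic θ hθ) (f : L2T) (hf : f ∈ H2) :
    Toeplitz θ hθ f = symbMul θ hθ f := by
  unfold Toeplitz PH2
  exact Submodule.starProjection_eq_self_iff.mpr (han f hf)


/-- For `θ` inner, `‖u‖ = 1` and `R₁f = θf + ⟨f,u⟩v`: if `θ̄v ∈ H²` and
`1 + ⟨θ̄v, u⟩ ≠ 0` then `Ker R₁ = {0}`; if `1 + ⟨θ̄v, u⟩ = 0` then `Ker R₁ = ℂ·(θ̄v)`. -/
theorem kernel_rank_one_perturbation_inner_symbol
    (θ : UnitCircle → ℂ) (hθ : MemLp θ ∞ μc) (hin : IsInner θ hθ)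
    (hθc : MemLp (fun x => conj (θ x)) ∞ μc)
    (u v : L2T) (hu : u ∈ H2) (hv : v ∈ H2) (hnu : ‖u‖ = 1)
    (htv : symbMul (fun x => conj (θ x)) hθc v ∈ H2) :
    (1 + ⟪u, symbMul (fun x => conj (θ x)) hθc v⟫ ≠ 0 →
      {f : L2T | f ∈ H2 ∧ Toeplitz θ hθ f + ⟪u, f⟫ • v = 0} = {0})
    ∧ (1 + ⟪u, symbMul (fun x => conj (θ x)) hθc v⟫ = 0 →
      {f : L2T | f ∈ H2 ∧ Toeplitz θ hθ f + ⟪u, f⟫ • v = 0}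
        = ((Submodule.span ℂ {symbMul (fun x => conj (θ x)) hθc v} : Submodule ℂ L2T) : Set L2T)) := by
  set w : L2T := symbMul (fun x => conj (θ x)) hθc v with hw
  have hvw : symbMul θ hθ w = v := symbMul_conj_cancel θ hθ hθc hin.2 v
  -- forward analysis of the kernel
  have key : ∀ f : L2T, f ∈ H2 → Toeplitz θ hθ f + ⟪u, f⟫ • v = 0 →
      f = (-⟪u, f⟫) • w := by
    intro f hf h0
    rw [Toeplitz_eq_symbMul θ hθ hin.1 f hf, ← hvw, ← symbMul_smul, ← symbMul_add] at h0
    have h1 := symbMul_inj θ hθ hin.2 _ h0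
    linear_combination (norm := module) h1
  constructor
  · intro hne
    ext f
    simp only [Set.mem_setOf_eq, Set.mem_singleton_iff]
    constructor
    · rintro ⟨hf, h0⟩
      have hfe := key f hf h0
      have hc : ⟪u, f⟫ * (1 + ⟪u, w⟫) = 0 := by
        have : ⟪u, f⟫ = ⟪u, (-⟪u, f⟫) • w⟫ := by rw [← hfe]
        rw [inner_smul_right] at this
        ring_nf
        ring_nf at this
        linear_combination this
      rcases mul_eq_zero.mp hc with h | h
      · rw [hfe, h]; simp
      · exact absurd h hne
    · rintro rfl
      refine ⟨H2.zero_mem, ?_⟩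
      unfold Toeplitz
      rw [symbMul_zero, map_zero, inner_zero_right]
      simp
  · intro heq
    have huw : ⟪u, w⟫ = -1 := by linear_combination heq
    ext f
    simp only [Set.mem_setOf_eq, SetLike.mem_coe, Submodule.mem_span_singleton]
    constructor
    · rintro ⟨hf, h0⟩
      exact ⟨-⟪u, f⟫, (key f hf h0).symm⟩
    · rintro ⟨c, rfl⟩
      refine ⟨H2.smul_mem c htv, ?_⟩
      rw [Toeplitz_eq_symbMul θ hθ hin.1 _ (H2.smul_mem c htv), symbMul_smul, hvw,
        inner_smul_right, huw]
      module
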